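/- arXiv:1702.02622 — 2 statements merged into one kernel-verified Lean document; each statement's English description precedes it below -/
import Mathlib

section
/- Let 0 < α ≤ 1, β < 0, γ ∈ ℝ, 0 < ν ≤ 1 and λ > 0. For every real u with |u| < 1 and every t > 0, the probability generating function of the SSTFPP satisfies Σ_{n=0}^∞ u^n · p^{α,β,γ}_ν(n,t) = Σ_{k=0}^∞ C_k · (-λ^ν (1-u)^ν t^{-β})^k / Γ(1-kβ). -/
open Real Finset

/-- Coefficients `C_k = ∏_{j=1}^k Γ(1+γ-jβ)/Γ(1+γ+α-(j-1)β)`. -/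
noncomputable def Ccoef (α β γ : ℝ) (k : ℕ) : ℝ :=
  ∏ j ∈ Finset.range k,
    Real.Gamma (1 + γ - ((j : ℝ) + 1) * β) / Real.Gamma (1 + γ + α - (j : ℝ) * β)

/-- State probabilities of the Saigo space and time fractional Poisson process. -/
noncomputable def pSS (α β γ ν lam : ℝ) (n : ℕ) (t : ℝ) : ℝ :=
  ((-1) ^ n / n.factorial) * ∑' k : ℕ,
    Ccoef α β γ k * (-(lam ^ ν) * t ^ (-β)) ^ k / Real.Gamma (1 - (k : ℝ) * β) *
      (Real.Gamma ((k : ℝ) * ν + 1) / Real.Gamma ((k : ℝ) * ν + 1 - n))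

/-!
Since `Γ(kν+1)/Γ(kν+1-n)/n!` is the binomial coefficient `(kν choose n)`, the generating function
is the double series `∑ₙ ∑ₖ dₖ (kν choose n) (-u)ⁿ` with `dₖ = Cₖ (-λ^ν t^{-β})ᵏ / Γ(1-kβ)`.
It converges absolutely: `|(a choose n)| ≤ (-1)ⁿ (-a choose n)`, whose series in `|u|` sums to
`(1-|u|)^{-a}`, and `∑ₖ |Cₖ / Γ(1-kβ)| wᵏ < ∞` for every `w`, because by Wendel's limit
`Γ(x+c) ~ Γ(x) xᶜ` the ratio of consecutive coefficients decays like `k^{-α}`. Exchanging the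
sums, the binomial series gives `∑ₙ (kν choose n)(-u)ⁿ = (1-u)^{kν}`.
-/

open Filter Topology

theorem Ring.choose_eq_prod_range_sub_div_factorial {K : Type*} [Field K] [CharZero K]
    [BinomialRing K] (a : K) (n : ℕ) :
    Ring.choose a n = (∏ i ∈ range n, (a - i)) / n.factorial := by
  rw [eq_div_iff (Nat.cast_ne_zero.2 n.factorial_ne_zero), ← descPochhammer_eval_eq_prod_range,
    ← nsmul_eq_mul', ← Ring.descPochhammer_eq_factorial_smul_choose, ← Polynomial.aeval_eq_smeval,
    ← descPochhammer_map (algebraMap ℤ K), Polynomial.eval_map_algebraMap]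

theorem tendsto_add_const_div_self_atTop (c : ℝ) :
    Tendsto (fun x : ℝ => (x + c) / x) atTop (𝓝 1) := by
  have h := tendsto_const_nhds (x := (1 : ℝ)).add
    (tendsto_const_nhds (x := c).div_atTop tendsto_id)
  rw [add_zero] at h
  refine h.congr' ?_
  filter_upwards [eventually_gt_atTop 0] with x hx
  simp only [id, add_div, div_self hx.ne']

theorem summable_of_eq_mul_of_tendsto_zero {R : Type*} [NormedRing R] [CompleteSpace R]
    {f q : ℕ → R} (hf : ∀ n, f (n + 1) = f n * q n) (hq : Tendsto q atTop (𝓝 0)) :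
    Summable f := by
  refine summable_of_ratio_norm_eventually_le (r := 1 / 2) (by norm_num) ?_
  filter_upwards [hq.norm.eventually_le_const (by norm_num : ‖(0 : R)‖ < 1 / 2)] with n hn
  rw [hf, mul_comm (1 / 2 : ℝ)]
  exact (norm_mul_le _ _).trans (mul_le_mul_of_nonneg_left hn (norm_nonneg _))

namespace Real

theorem hasSum_choose_mul_pow (a : ℝ) {x : ℝ} (hx : |x| < 1) :
    HasSum (fun n : ℕ => Ring.choose a n * x ^ n) ((1 + x) ^ a) := by
  have hmem : x ∈ Metric.eball (0 : ℝ) 1 := by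
    rw [← ENNReal.ofReal_one, Metric.eball_ofReal]; simpa using hx
  simpa [binomialSeries, FormalMultilinearSeries.ofScalars_apply_eq, mul_comm] using
    (one_add_rpow_hasFPowerSeriesOnBall_zero (a := a)).hasSum hmem

theorem abs_choose_mul_pow_le {a : ℝ} (ha : 0 ≤ a) (n : ℕ) (x : ℝ) :
    |Ring.choose a n * x ^ n| ≤ Ring.choose (-a) n * (-|x|) ^ n := by
  have hneg : ∏ i ∈ range n, (-a - i) = (-1) ^ n * ∏ i ∈ range n, (a + i) := by
    simpa [neg_sub_left, add_comm] using prod_neg (s := range n) fun i : ℕ => a + i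
  have hprod : |∏ i ∈ range n, (a - i)| ≤ ∏ i ∈ range n, (a + i) := by
    rw [abs_prod]
    exact prod_le_prod (fun _ _ => abs_nonneg _) fun i _ =>
      (abs_sub _ _).trans_eq (by rw [abs_of_nonneg ha, Nat.abs_cast])
  rw [Ring.choose_eq_prod_range_sub_div_factorial, Ring.choose_eq_prod_range_sub_div_factorial,
    hneg, neg_pow |x|, abs_mul, abs_div, abs_pow, Nat.abs_cast]
  calc |∏ i ∈ range n, (a - i)| / n.factorial * |x| ^ n
      ≤ (∏ i ∈ range n, (a + i)) / n.factorial * |x| ^ n := by gcongr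
    _ = _ := by
      rw [mul_div_assoc, mul_mul_mul_comm, ← mul_pow, neg_one_mul, neg_neg, one_pow, one_mul]

theorem tsum_tsum_mul_choose_mul_pow_comm {d : ℕ → ℝ} {ν x : ℝ} (hν : 0 ≤ ν) (hx : |x| < 1)
    (hd : Summable fun k : ℕ => |d k| * (1 - |x|) ^ (-(k * ν))) :
    ∑' n : ℕ, ∑' k : ℕ, d k * (Ring.choose (k * ν) n * x ^ n) =
      ∑' k : ℕ, d k * (1 + x) ^ (k * ν) := by
  set g : ℕ × ℕ → ℝ := fun p => |d p.1| * (Ring.choose (-(p.1 * ν)) p.2 * (-|x|) ^ p.2)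
  have hbound (k n : ℕ) : |d k * (Ring.choose (k * ν) n * x ^ n)| ≤ g (k, n) := by
    rw [abs_mul]
    exact mul_le_mul_of_nonneg_left (abs_choose_mul_pow_le (by positivity) n x) (abs_nonneg _)
  have hcol (k : ℕ) : HasSum (fun n => g (k, n)) (|d k| * (1 - |x|) ^ (-(k * ν))) := by
    rw [sub_eq_add_neg]
    exact (hasSum_choose_mul_pow _ (by rwa [abs_neg, abs_abs])).mul_left _
  have hg : Summable g :=
    (summable_prod_of_nonneg fun p => (abs_nonneg _).trans (hbound p.1 p.2)).2
      ⟨fun k => (hcol k).summable, hd.congr fun k => (hcol k).tsum_eq.symm⟩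
  rw [Summable.tsum_comm (hg.of_norm_bounded fun p => hbound p.1 p.2)]
  exact tsum_congr fun k => by rw [tsum_mul_left, (hasSum_choose_mul_pow _ hx).tsum_eq]

/-- At the poles of `Γ(a + 1 - n)` both sides vanish (`Gamma` is `0` there and `x / 0 = 0`),
which is the reciprocal-Gamma convention of the paper. -/
theorem Gamma_add_one_div_Gamma_add_one_sub_nat {a : ℝ} (ha : 0 ≤ a) (n : ℕ) :
    Gamma (a + 1) / Gamma (a + 1 - n) = ∏ i ∈ range n, (a - i) := by
  induction n with
  | zero => simpa using div_self (Gamma_pos_of_pos (by linarith : 0 < a + 1)).ne'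
  | succ n ih =>
    rw [prod_range_succ, ← ih, Nat.cast_succ, show a + 1 - (n + 1) = a - n by ring]
    rcases eq_or_ne (a - n) 0 with h | h
    · simp [h]
    · rw [show a + 1 - n = a - n + 1 by ring, Gamma_add_one h, mul_comm (a - n),
        ← div_div, div_mul_cancel₀ _ h]

theorem Gamma_add_le_Gamma_mul_rpow {x s : ℝ} (hx : 0 < x) (hs₀ : 0 ≤ s) (hs₁ : s ≤ 1) :
    Gamma (x + s) ≤ Gamma x * x ^ s := by
  have hΓ := Gamma_pos_of_pos hx
  have hconv := convexOn_log_Gamma.2 (Set.mem_Ioi.2 hx)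
    (Set.mem_Ioi.2 (by linarith : 0 < x + 1)) (by linarith : 0 ≤ 1 - s) hs₀ (by ring)
  simp only [smul_eq_mul, Function.comp_apply, Gamma_add_one hx.ne',
    show (1 - s) * x + s * (x + 1) = x + s by ring, log_mul hx.ne' hΓ.ne'] at hconv
  rw [← log_le_log_iff (Gamma_pos_of_pos (by linarith)) (by positivity), log_mul hΓ.ne'
    (by positivity), log_rpow hx]
  linarith

theorem mul_Gamma_le_Gamma_add_mul_rpow {x s : ℝ} (hx : 0 < x) (hs₀ : 0 ≤ s) (hs₁ : s ≤ 1) :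
    x * Gamma x ≤ Gamma (x + s) * (x + s) ^ (1 - s) := by
  have hxs : 0 < x + s := by linarith
  have hΓ := Gamma_pos_of_pos hxs
  have hconv := convexOn_log_Gamma.2 (Set.mem_Ioi.2 hxs)
    (Set.mem_Ioi.2 (by linarith : 0 < x + s + 1)) hs₀ (by linarith : 0 ≤ 1 - s) (by ring)
  simp only [smul_eq_mul, Function.comp_apply, Gamma_add_one hxs.ne',
    show s * (x + s) + (1 - s) * (x + s + 1) = x + 1 by ring, log_mul hxs.ne' hΓ.ne',
    Gamma_add_one hx.ne'] at hconv
  rw [← log_le_log_iff (by positivity) (by positivity), log_mul hΓ.ne' (by positivity),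
    log_rpow hxs]
  linarith

theorem Gamma_add_div_Gamma_mul_rpow_add_one {x c : ℝ} (hx : 0 < x) (hxc : x + c ≠ 0) :
    Gamma (x + (c + 1)) / (Gamma x * x ^ (c + 1)) =
      Gamma (x + c) / (Gamma x * x ^ c) * ((x + c) / x) := by
  rw [← add_assoc, Gamma_add_one hxc, rpow_add_one hx.ne']
  have := Gamma_pos_of_pos hx
  field_simp

theorem tendsto_Gamma_add_div_Gamma_mul_rpow_add_one_iff (c : ℝ) :
    Tendsto (fun x => Gamma (x + (c + 1)) / (Gamma x * x ^ (c + 1))) atTop (𝓝 1) ↔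
      Tendsto (fun x => Gamma (x + c) / (Gamma x * x ^ c)) atTop (𝓝 1) := by
  have hshift : ∀ᶠ x in atTop, Gamma (x + (c + 1)) / (Gamma x * x ^ (c + 1)) =
      Gamma (x + c) / (Gamma x * x ^ c) * ((x + c) / x) := by
    filter_upwards [eventually_gt_atTop 0, eventually_gt_atTop (-c)] with x hx hxc
    exact Gamma_add_div_Gamma_mul_rpow_add_one hx (by linarith)
  have hne : ∀ᶠ x in atTop, (x + c) / x ≠ 0 := by
    filter_upwards [eventually_gt_atTop 0, eventually_gt_atTop (-c)] with x hx hxc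
    exact div_ne_zero (by linarith) hx.ne'
  rw [tendsto_congr' hshift]
  refine ⟨fun h => ?_, fun h => by simpa using h.mul (tendsto_add_const_div_self_atTop c)⟩
  have h' := h.div (tendsto_add_const_div_self_atTop c) one_ne_zero
  rw [div_one] at h'
  refine h'.congr' ?_
  filter_upwards [hne] with x hx
  exact mul_div_cancel_right₀ _ hx

theorem tendsto_Gamma_add_div_Gamma_mul_rpow_of_mem_Icc {c : ℝ} (hc₀ : 0 ≤ c) (hc₁ : c ≤ 1) :
    Tendsto (fun x => Gamma (x + c) / (Gamma x * x ^ c)) atTop (𝓝 1) := by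
  have hlower : Tendsto (fun x : ℝ => ((x + c) / x) ^ (c - 1)) atTop (𝓝 1) := by
    simpa [Function.comp_def] using
      (continuousAt_rpow_const 1 (c - 1) (Or.inl one_ne_zero)).tendsto.comp
        (tendsto_add_const_div_self_atTop c)
  refine tendsto_of_tendsto_of_tendsto_of_le_of_le' hlower tendsto_const_nhds ?_ ?_
  · filter_upwards [eventually_gt_atTop 0] with x hx
    have hΓ := Gamma_pos_of_pos hx
    have hxs : 0 < x + c := by linarith
    have hx1 : x ^ (c - 1) * x = x ^ c := by rw [← rpow_add_one hx.ne', sub_add_cancel]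
    have hΓc := mul_Gamma_le_Gamma_add_mul_rpow hx hc₀ hc₁
    rw [le_div_iff₀ (by positivity), div_rpow hxs.le hx.le, ← hx1,
      show c - 1 = -(1 - c) by ring, rpow_neg hxs.le]
    field_simp
    linarith
  · filter_upwards [eventually_gt_atTop 0] with x hx
    have hΓ := Gamma_pos_of_pos hx
    rw [div_le_one (by positivity)]
    exact Gamma_add_le_Gamma_mul_rpow hx hc₀ hc₁

/-- Wendel's limit. -/
theorem tendsto_Gamma_add_div_Gamma_mul_rpow (c : ℝ) :
    Tendsto (fun x => Gamma (x + c) / (Gamma x * x ^ c)) atTop (𝓝 1) := by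
  have key (m : ℤ) : Tendsto (fun x => Gamma (x + (Int.fract c + m)) /
      (Gamma x * x ^ (Int.fract c + m))) atTop (𝓝 1) := by
    induction m using Int.induction_on with
    | zero =>
      have := tendsto_Gamma_add_div_Gamma_mul_rpow_of_mem_Icc (Int.fract_nonneg c)
        (Int.fract_lt_one c).le
      simpa using this
    | succ i ih =>
      rwa [Int.cast_add, Int.cast_one, ← add_assoc,
        tendsto_Gamma_add_div_Gamma_mul_rpow_add_one_iff]
    | pred i ih =>
      rwa [← tendsto_Gamma_add_div_Gamma_mul_rpow_add_one_iff, Int.cast_sub, Int.cast_one,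
        add_assoc, sub_add_cancel]
  simpa using key ⌊c⌋

theorem tendsto_Gamma_mul_Gamma_div_Gamma_mul_Gamma {a b c : ℝ} (h : a + b < c) :
    Tendsto (fun x => Gamma (x + a) * Gamma (x + b) / (Gamma x * Gamma (x + c)))
      atTop (𝓝 0) := by
  have hlim := ((tendsto_Gamma_add_div_Gamma_mul_rpow a).mul
    (tendsto_Gamma_add_div_Gamma_mul_rpow b)).div (tendsto_Gamma_add_div_Gamma_mul_rpow c)
    one_ne_zero |>.mul (tendsto_rpow_neg_atTop (sub_pos.2 h))
  rw [mul_one, div_one, one_mul] at hlim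
  refine hlim.congr' ?_
  filter_upwards [eventually_gt_atTop 0, eventually_gt_atTop (-c)] with x hx hxc
  have hΓ := Gamma_pos_of_pos hx
  have hΓc := Gamma_pos_of_pos (by linarith : 0 < x + c)
  have hpow : x ^ (-(c - (a + b))) * x ^ c = x ^ a * x ^ b := by
    rw [← rpow_add hx, ← rpow_add hx]; ring_nf
  have := rpow_pos_of_pos hx c
  simp only [Pi.div_apply]
  field_simp
  rw [mul_assoc _ (x ^ c), mul_comm (x ^ c), hpow]
  ring

end Real

theorem Ccoef_succ (α β γ : ℝ) (k : ℕ) :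
    Ccoef α β γ (k + 1) =
      Ccoef α β γ k * (Gamma (1 + γ - (k + 1) * β) / Gamma (1 + γ + α - k * β)) :=
  prod_range_succ _ k

theorem summable_Ccoef_div_Gamma_mul_pow {α β : ℝ} (γ : ℝ) (hα : 0 < α) (hβ : β < 0) (z : ℝ) :
    Summable fun k : ℕ => Ccoef α β γ k / Gamma (1 - k * β) * z ^ k := by
  set x : ℕ → ℝ := fun k => 1 + γ + α - k * β
  have hx : Tendsto x atTop atTop :=
    (tendsto_atTop_add_const_left _ (1 + γ + α)
      (tendsto_natCast_atTop_atTop.atTop_mul_const (neg_pos.2 hβ))).congr fun k => by ring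
  refine summable_of_eq_mul_of_tendsto_zero (q := fun k => Gamma (x k + (-α - β)) *
      Gamma (x k + (-γ - α)) / (Gamma (x k) * Gamma (x k + (-γ - α - β))) * z) (fun k => ?_)
    (by simpa using ((tendsto_Gamma_mul_Gamma_div_Gamma_mul_Gamma
      (by linarith : (-α - β) + (-γ - α) < -γ - α - β)).comp hx).mul_const z)
  have hΓ : Gamma (1 - k * β) ≠ 0 :=
    (Gamma_pos_of_pos (by nlinarith [k.cast_nonneg (α := ℝ)])).ne'
  simp only [x, Ccoef_succ, Nat.cast_succ]
  rw [show 1 + γ + α - k * β + (-α - β) = 1 + γ - (k + 1) * β by ring,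
    show 1 + γ + α - k * β + (-γ - α) = 1 - k * β by ring,
    show 1 + γ + α - k * β + (-γ - α - β) = 1 - (k + 1) * β by ring]
  field_simp
  ring

theorem pow_mul_pSS_eq_tsum {ν : ℝ} (α β γ lam : ℝ) (hν : 0 ≤ ν) (u t : ℝ) (n : ℕ) :
    u ^ n * pSS α β γ ν lam n t = ∑' k : ℕ,
      Ccoef α β γ k * (-(lam ^ ν) * t ^ (-β)) ^ k / Gamma (1 - k * β) *
        (Ring.choose (k * ν) n * (-u) ^ n) := by
  rw [pSS, ← mul_assoc, ← tsum_mul_left]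
  refine tsum_congr fun k => ?_
  rw [Gamma_add_one_div_Gamma_add_one_sub_nat (by positivity),
    Ring.choose_eq_prod_range_sub_div_factorial, neg_pow u]
  ring

theorem sstfpp_pgf_general (α β γ ν lam : ℝ) (hα0 : 0 < α)
    (hβ : β < 0) (hν0 : 0 < ν) :
    ∀ (u t : ℝ), |u| < 1 → 0 < t →
      (∑' n : ℕ, u ^ n * pSS α β γ ν lam n t) =
        ∑' k : ℕ, Ccoef α β γ k * (-(lam ^ ν * (1 - u) ^ ν) * t ^ (-β)) ^ k /
          Real.Gamma (1 - (k : ℝ) * β) := by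
  intro u t hu _
  set c := -(lam ^ ν) * t ^ (-β)
  have h1u : 0 ≤ 1 - |u| := by linarith
  have hd : Summable fun k : ℕ =>
      |Ccoef α β γ k * c ^ k / Gamma (1 - k * β)| * (1 - |u|) ^ (-(k * ν)) := by
    refine (summable_Ccoef_div_Gamma_mul_pow γ hα0 hβ (|c| * (1 - |u|) ^ (-ν))).abs.congr
      fun k => ?_
    rw [show -((k : ℝ) * ν) = -ν * k by ring, rpow_mul_natCast h1u]
    simp only [abs_mul, abs_div, abs_pow, abs_abs, abs_of_nonneg (rpow_nonneg h1u _), mul_pow]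
    ring
  calc ∑' n : ℕ, u ^ n * pSS α β γ ν lam n t
      = ∑' n : ℕ, ∑' k : ℕ, Ccoef α β γ k * c ^ k / Gamma (1 - k * β) *
          (Ring.choose (k * ν) n * (-u) ^ n) :=
        tsum_congr (pow_mul_pSS_eq_tsum α β γ lam hν0.le u t)
    _ = ∑' k : ℕ, Ccoef α β γ k * c ^ k / Gamma (1 - k * β) * (1 + -u) ^ (k * ν) :=
        tsum_tsum_mul_choose_mul_pow_comm hν0.le (by rwa [abs_neg])
          (by simpa only [abs_neg] using hd)
    _ = _ := tsum_congr fun k => by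
        rw [← sub_eq_add_neg, show (k : ℝ) * ν = ν * k by ring,
          rpow_mul_natCast (by linarith [le_abs_self u])]
        ring

theorem sstfpp_pgf (α β γ ν lam : ℝ) (hα0 : 0 < α) (hα1 : α ≤ 1)
    (hβ : β < 0) (hν0 : 0 < ν) (hν1 : ν ≤ 1) (hlam : 0 < lam) :
    ∀ (u t : ℝ), |u| < 1 → 0 < t →
      (∑' n : ℕ, u ^ n * pSS α β γ ν lam n t) =
        ∑' k : ℕ, Ccoef α β γ k * (-(lam ^ ν * (1 - u) ^ ν) * t ^ (-β)) ^ k /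
          Real.Gamma (1 - (k : ℝ) * β) :=
  sstfpp_pgf_general α β γ ν lam hα0 hβ hν0
end

section
/- Let 0 < α ≤ 1, 0 < ν ≤ 1 and λ > 0. Define for natural numbers k, n and t ≥ 0 the Adomian components q_k(n,t) := ((-1)^n/n!) · (kν)_n · (-λ^ν t^α)^k / Γ(kα+1). Then q_0(0,t) = 1, q_0(n,t) = 0 for n ≥ 1, and for every k ≥ 1, every n and every t > 0 the Riemann–Liouville recursion holds: q_k(n,t) = -λ^ν · I^α_t ( s ↦ Σ_{r=0}^{n} (-1)^r ((ν)_r / r!) · q_{k-1}(n-r, s) ) (t). Consequently Σ_{k=0}^∞ q_k(n,t) equals the STFPP probability mass function p^α_ν(n,t). -/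
open Real Finset

/-- Falling factorial `(x)_r = x(x-1)⋯(x-r+1)`. -/
noncomputable def fallFac (x : ℝ) (r : ℕ) : ℝ := ∏ i ∈ Finset.range r, (x - i)

/-- Riemann–Liouville fractional integral `I^α_t`. -/
noncomputable def rlI (α : ℝ) (f : ℝ → ℝ) (t : ℝ) : ℝ :=
  (1 / Real.Gamma α) * ∫ s in (0:ℝ)..t, (t - s) ^ (α - 1) * f s

/-- Adomian components for the STFPP. -/
noncomputable def qSTF (α ν lam : ℝ) (k n : ℕ) (t : ℝ) : ℝ :=
  ((-1) ^ n / n.factorial) * fallFac ((k : ℝ) * ν) n *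
    (-(lam ^ ν) * t ^ α) ^ k / Real.Gamma ((k : ℝ) * α + 1)

/-- State probabilities of the space and time fractional Poisson process (STFPP). -/
noncomputable def pSTF (α ν lam : ℝ) (n : ℕ) (t : ℝ) : ℝ :=
  ((-1) ^ n / n.factorial) * ∑' k : ℕ,
    (-(lam ^ ν) * t ^ α) ^ k / Real.Gamma ((k : ℝ) * α + 1) *
      (Real.Gamma ((k : ℝ) * ν + 1) / Real.Gamma ((k : ℝ) * ν + 1 - n))

/-! Each Adomian component `q_k(n, ·)` is a constant multiple of `t ^ (k α)`. The Beta integral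
turns the Riemann–Liouville integral of `s ^ β` into `Γ(β + 1) / Γ(α + β + 1) · t ^ (α + β)`, and
after writing `(x)_r / r!` as the generalized binomial coefficient `x.choose r`, the sum over `r`
in the recursion is the Chu–Vandermonde identity `∑ ν.choose r · (kν).choose (n - r) =
((k + 1)ν).choose n`. The series identity holds termwise, since `Γ(x + 1) / Γ(x + 1 - n) = (x)_n`
for `x ≥ 0`. -/

open scoped Nat

lemma fallFac_eq_eval_descPochhammer (x : ℝ) (n : ℕ) :
    fallFac x n = (descPochhammer ℝ n).eval x :=
  (descPochhammer_eval_eq_prod_range n x).symm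

lemma fallFac_div_factorial (x : ℝ) (n : ℕ) : fallFac x n / n ! = Ring.choose x n := by
  rw [Ring.choose_eq_smul, ← Polynomial.aeval_eq_smeval, Polynomial.aeval_def,
    Polynomial.eval₂_eq_eval_map, descPochhammer_map, fallFac_eq_eval_descPochhammer,
    smul_eq_mul, div_eq_inv_mul]

lemma sum_range_choose_mul_choose (x y : ℝ) (n : ℕ) :
    ∑ r ∈ range (n + 1), Ring.choose x r * Ring.choose y (n - r) = Ring.choose (x + y) n := by
  rw [Ring.add_choose_eq n (Commute.all x y),
    Finset.Nat.sum_antidiagonal_eq_sum_range_succ (fun i j => Ring.choose x i * Ring.choose y j)]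

lemma Real.Gamma_add_nat_eq_eval_ascPochhammer_mul {y : ℝ} (hy : ∀ k : ℕ, y ≠ -k) (n : ℕ) :
    Real.Gamma (y + n) = (ascPochhammer ℝ n).eval y * Real.Gamma y := by
  induction n with
  | zero => simp
  | succ n ih =>
    have hyn : y + n ≠ 0 := fun h => hy n (by linarith)
    rw [Nat.cast_succ, ← add_assoc, Real.Gamma_add_one hyn, ih, ascPochhammer_succ_eval]
    ring

lemma Gamma_add_one_div_Gamma_sub_nat {x : ℝ} (hx : 0 ≤ x) (n : ℕ) :
    Real.Gamma (x + 1) / Real.Gamma (x + 1 - n) = fallFac x n := by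
  rw [fallFac_eq_eval_descPochhammer]
  -- At a pole of `Γ` Mathlib's junk value `Γ = 0` matches the reciprocal-Gamma convention,
  -- and `x` is then one of the roots `0, …, n - 1` of `(x)_n`.
  by_cases h : ∃ k : ℕ, x + 1 - n = -k
  · obtain ⟨k, hk⟩ := h
    have hkn : k + 1 ≤ n := by exact_mod_cast (by linarith : (k : ℝ) + 1 ≤ n)
    have hx' : x = ((n - (k + 1) : ℕ) : ℝ) := by push_cast [Nat.cast_sub hkn]; linarith
    rw [hk, Real.Gamma_neg_nat_eq_zero, div_zero, hx',
      descPochhammer_eval_coe_nat_of_lt (by omega)]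
  · push Not at h
    have hG := Real.Gamma_add_nat_eq_eval_ascPochhammer_mul h n
    rw [sub_add_cancel] at hG
    rw [hG, mul_div_cancel_right₀ _ (Real.Gamma_ne_zero fun k => h k),
      descPochhammer_eval_eq_ascPochhammer, sub_add_eq_add_sub]

lemma integral_rpow_mul_one_sub_rpow {u v : ℝ} (hu : 0 < u) (hv : 0 < v) :
    ∫ x in (0:ℝ)..1, x ^ (u - 1) * (1 - x) ^ (v - 1)
      = Real.Gamma u * Real.Gamma v / Real.Gamma (u + v) := by
  have hbeta : Complex.betaIntegral u v
      = ((∫ x in (0:ℝ)..1, x ^ (u - 1) * (1 - x) ^ (v - 1) : ℝ) : ℂ) := by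
    rw [Complex.betaIntegral, ← intervalIntegral.integral_ofReal]
    refine intervalIntegral.integral_congr fun x hx => ?_
    rw [Set.uIcc_of_le zero_le_one] at hx
    push_cast
    rw [Complex.ofReal_cpow hx.1, Complex.ofReal_cpow (sub_nonneg.2 hx.2)]
    push_cast
    ring
  have hC := Complex.Gamma_mul_Gamma_eq_betaIntegral
    (s := (u : ℂ)) (t := (v : ℂ)) (by simpa using hu) (by simpa using hv)
  rw [hbeta, Complex.Gamma_ofReal, Complex.Gamma_ofReal, ← Complex.ofReal_add,
    Complex.Gamma_ofReal] at hC
  rw [eq_div_iff (Real.Gamma_pos_of_pos (add_pos hu hv)).ne', mul_comm]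
  exact_mod_cast hC.symm

lemma rlI_congr {α t : ℝ} {f g : ℝ → ℝ} (h : Set.EqOn f g (Set.uIcc 0 t)) :
    rlI α f t = rlI α g t := by
  rw [rlI, rlI, intervalIntegral.integral_congr fun s hs => by rw [h hs]]

lemma rlI_const_mul (α c t : ℝ) (f : ℝ → ℝ) :
    rlI α (fun s => c * f s) t = c * rlI α f t := by
  simp only [rlI, mul_left_comm _ c, intervalIntegral.integral_const_mul]

lemma rlI_rpow {α β t : ℝ} (hα : 0 < α) (hβ : -1 < β) (ht : 0 < t) :
    rlI α (fun s => s ^ β) t = Real.Gamma (β + 1) / Real.Gamma (α + β + 1) * t ^ (α + β) := by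
  have hsubst : ∫ s in (0:ℝ)..t, (t - s) ^ (α - 1) * s ^ β
      = t * ∫ x in (0:ℝ)..1, (t - t * x) ^ (α - 1) * (t * x) ^ β := by
    rw [intervalIntegral.integral_comp_mul_left (fun s => (t - s) ^ (α - 1) * s ^ β) ht.ne',
      mul_zero, mul_one, smul_eq_mul, mul_inv_cancel_left₀ ht.ne']
  have hscale : ∀ x ∈ Set.uIcc (0:ℝ) 1, (t - t * x) ^ (α - 1) * (t * x) ^ β
      = t ^ (α - 1) * t ^ β * (x ^ (β + 1 - 1) * (1 - x) ^ (α - 1)) := by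
    intro x hx
    rw [Set.uIcc_of_le zero_le_one] at hx
    rw [show t - t * x = t * (1 - x) by ring, Real.mul_rpow ht.le (sub_nonneg.2 hx.2),
      Real.mul_rpow ht.le hx.1, add_sub_cancel_right]
    ring
  have hpow : t * (t ^ (α - 1) * t ^ β) = t ^ (α + β) := by
    rw [show α + β = 1 + (α - 1) + β by ring, Real.rpow_add ht, Real.rpow_add ht, Real.rpow_one]
    ring
  rw [rlI, hsubst, intervalIntegral.integral_congr hscale, intervalIntegral.integral_const_mul,
    integral_rpow_mul_one_sub_rpow (by linarith) hα, show β + 1 + α = α + β + 1 by ring, ← hpow]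
  field_simp [(Real.Gamma_pos_of_pos hα).ne']

lemma qSTF_eq_choose_mul_rpow (α ν lam : ℝ) (k n : ℕ) {s : ℝ} (hs : 0 ≤ s) :
    qSTF α ν lam k n s = (-1) ^ n * Ring.choose (k * ν) n *
      ((-(lam ^ ν)) ^ k / Real.Gamma (k * α + 1)) * s ^ (k * α) := by
  rw [qSTF, mul_pow, ← Real.rpow_natCast (s ^ α), ← Real.rpow_mul hs, mul_comm α,
    ← fallFac_div_factorial]
  ring

lemma sum_qSTF_eq_choose_mul_rpow (α ν lam : ℝ) (m n : ℕ) {s : ℝ} (hs : 0 ≤ s) :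
    ∑ r ∈ range (n + 1), (-1) ^ r * (fallFac ν r / r !) * qSTF α ν lam m (n - r) s
      = (-1) ^ n * Ring.choose ((m + 1) * ν) n *
        ((-(lam ^ ν)) ^ m / Real.Gamma (m * α + 1)) * s ^ (m * α) := by
  have hterm : ∀ r ∈ range (n + 1),
      (-1) ^ r * (fallFac ν r / r !) * qSTF α ν lam m (n - r) s
        = (-1) ^ n * ((-(lam ^ ν)) ^ m / Real.Gamma (m * α + 1)) * s ^ (m * α) *
          (Ring.choose ν r * Ring.choose (m * ν) (n - r)) := by
    intro r hr
    have hsign : (-1 : ℝ) ^ n = (-1) ^ r * (-1) ^ (n - r) := by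
      rw [← pow_add, Nat.add_sub_cancel' (Nat.lt_succ_iff.mp (mem_range.mp hr))]
    rw [fallFac_div_factorial, qSTF_eq_choose_mul_rpow α ν lam m (n - r) hs, hsign]
    ring
  rw [sum_congr rfl hterm, ← mul_sum, sum_range_choose_mul_choose, add_mul, one_mul, add_comm ν]
  ring

lemma qSTF_succ_eq_rlI {α : ℝ} (ν lam : ℝ) (hα : 0 < α) (m n : ℕ) {t : ℝ} (ht : 0 < t) :
    qSTF α ν lam (m + 1) n t = -(lam ^ ν) * rlI α (fun s => ∑ r ∈ range (n + 1),
      (-1) ^ r * (fallFac ν r / r !) * qSTF α ν lam m (n - r) s) t := by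
  have hβ : (0 : ℝ) ≤ m * α := by positivity
  rw [rlI_congr fun s hs => sum_qSTF_eq_choose_mul_rpow α ν lam m n
      (Set.uIcc_of_le ht.le ▸ hs).1, rlI_const_mul, rlI_rpow hα (by linarith) ht,
    qSTF_eq_choose_mul_rpow α ν lam (m + 1) n ht.le]
  have hG : Real.Gamma (m * α + 1) ≠ 0 := (Real.Gamma_pos_of_pos (by linarith)).ne'
  push_cast
  rw [show α + m * α = (m + 1) * α by ring, pow_succ]
  field_simp

theorem stfpp_adomian_decomposition_general (α ν lam : ℝ) (hα0 : 0 < α)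
    (hν0 : 0 < ν) :
    (∀ t : ℝ, 0 ≤ t → qSTF α ν lam 0 0 t = 1) ∧
    (∀ n : ℕ, 1 ≤ n → ∀ t : ℝ, 0 ≤ t → qSTF α ν lam 0 n t = 0) ∧
    (∀ k : ℕ, 1 ≤ k → ∀ (n : ℕ) (t : ℝ), 0 < t →
      qSTF α ν lam k n t =
        -(lam ^ ν) * rlI α (fun s => ∑ r ∈ Finset.range (n + 1),
          (-1) ^ r * (fallFac ν r / r.factorial) * qSTF α ν lam (k - 1) (n - r) s) t) ∧
    (∀ (n : ℕ) (t : ℝ), 0 ≤ t → (∑' k : ℕ, qSTF α ν lam k n t) = pSTF α ν lam n t) := by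
  refine ⟨fun t _ => by simp [qSTF, fallFac], fun n hn t _ => ?_, fun k hk n t ht => ?_,
    fun n t _ => ?_⟩
  · simp [qSTF, fallFac_eq_eval_descPochhammer, Nat.one_le_iff_ne_zero.mp hn]
  · obtain ⟨m, rfl⟩ := Nat.exists_eq_add_of_le' hk
    exact qSTF_succ_eq_rlI ν lam hα0 m n ht
  · rw [pSTF, ← tsum_mul_left]
    refine tsum_congr fun k => ?_
    rw [Gamma_add_one_div_Gamma_sub_nat (by positivity), qSTF]
    ring

theorem stfpp_adomian_decomposition (α ν lam : ℝ) (hα0 : 0 < α) (hα1 : α ≤ 1)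
    (hν0 : 0 < ν) (hν1 : ν ≤ 1) (hlam : 0 < lam) :
    (∀ t : ℝ, 0 ≤ t → qSTF α ν lam 0 0 t = 1) ∧
    (∀ n : ℕ, 1 ≤ n → ∀ t : ℝ, 0 ≤ t → qSTF α ν lam 0 n t = 0) ∧
    (∀ k : ℕ, 1 ≤ k → ∀ (n : ℕ) (t : ℝ), 0 < t →
      qSTF α ν lam k n t =
        -(lam ^ ν) * rlI α (fun s => ∑ r ∈ Finset.range (n + 1),
          (-1) ^ r * (fallFac ν r / r.factorial) * qSTF α ν lam (k - 1) (n - r) s) t) ∧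
    (∀ (n : ℕ) (t : ℝ), 0 ≤ t → (∑' k : ℕ, qSTF α ν lam k n t) = pSTF α ν lam n t) :=
  stfpp_adomian_decomposition_general α ν lam hα0 hν0
end
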